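/- Let F be a field and h ∈ F[x] nonzero. If g ∈ F[x] divides h, then g is a normal element of A_h, i.e., g·A_h = A_h·g. Specifically, if h = gf then ŷg = g(ŷ + fg') and gŷ = (ŷ − fg')g. -/
import Mathlib

open Polynomial FreeAlgebra

/-- The defining relation of `A_h`: `y * x = x * y + h(x)`. -/
inductive ahRel (F : Type) [Field F] (h : F[X]) :
    FreeAlgebra F (Fin 2) → FreeAlgebra F (Fin 2) → Prop
  | rel : ahRel F h (ι F 1 * ι F 0) (ι F 0 * ι F 1 + aeval (ι F 0) h)

/-- The algebra `A_h` generated by `x, y` with `yx - xy = h(x)`. -/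
noncomputable abbrev AW (F : Type) [Field F] (h : F[X]) := RingQuot (ahRel F h)

/-- The generator `x` of `A_h`. -/
noncomputable def aX (F : Type) [Field F] (h : F[X]) : AW F h :=
  RingQuot.mkAlgHom F (ahRel F h) (ι F 0)

/-- The generator `y` of `A_h`. -/
noncomputable def aY (F : Type) [Field F] (h : F[X]) : AW F h :=
  RingQuot.mkAlgHom F (ahRel F h) (ι F 1)

lemma aeval_comm (F : Type) [Field F] (h : F[X]) (p q : F[X]) :
    aeval (aX F h) p * aeval (aX F h) q = aeval (aX F h) q * aeval (aX F h) p := by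
  rw [← map_mul, ← map_mul, mul_comm]

lemma aX_comm (F : Type) [Field F] (h : F[X]) (p : F[X]) :
    aeval (aX F h) p * aX F h = aX F h * aeval (aX F h) p := by
  have := aeval_comm F h p X
  simpa using this

lemma rel1 (F : Type) [Field F] (h : F[X]) :
    aY F h * aX F h = aX F h * aY F h + aeval (aX F h) h := by
  have := RingQuot.mkAlgHom_rel F (ahRel.rel : ahRel F h _ _)
  simp only [map_mul, map_add] at this
  rw [aY, aX, this, Polynomial.aeval_algHom_apply]

lemma ahCommutator (F : Type) [Field F] (h : F[X]) (p : F[X]) :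
    aY F h * aeval (aX F h) p =
      aeval (aX F h) p * aY F h + aeval (aX F h) h * aeval (aX F h) (derivative p) := by
  induction p using Polynomial.induction_on with
  | C a => simp [Algebra.commutes]
  | add p q hp hq =>
      simp only [map_add, mul_add, add_mul, derivative_add, hp, hq]
      abel
  | monomial n a ih =>
      set X' := aX F h
      set Y := aY F h
      set H := aeval X' h
      set A := aeval X' (C a * X ^ n) with hA
      set D := aeval X' (derivative (C a * X ^ n)) with hD
      have e1 : (C a * X ^ (n + 1) : F[X]) = (C a * X ^ n) * X := by ring
      have e2 : derivative (C a * X ^ (n + 1) : F[X]) =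
          derivative (C a * X ^ n) * X + C a * X ^ n := by
        rw [e1, derivative_mul, derivative_X, mul_one]
      have key : aeval X' (C a * X ^ (n + 1)) = A * X' := by
        rw [e1, map_mul, aeval_X]
      have keyD : aeval X' (derivative (C a * X ^ (n + 1))) = D * X' + A := by
        rw [e2, map_add, map_mul, aeval_X]
      rw [key, keyD]
      calc Y * (A * X') = (Y * A) * X' := by rw [mul_assoc]
        _ = (A * Y + H * D) * X' := by rw [ih]
        _ = A * (Y * X') + H * D * X' := by noncomm_ring
        _ = A * (X' * Y + H) + H * D * X' := by rw [rel1]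
        _ = A * X' * Y + (A * H + H * D * X') := by noncomm_ring
        _ = A * X' * Y + H * (D * X' + A) := by
            rw [hA, hD, aeval_comm]; noncomm_ring

lemma yG (F : Type) [Field F] (h g f : F[X]) (hfg : h = g * f) :
    aY F h * aeval (aX F h) g =
      aeval (aX F h) g * (aY F h + aeval (aX F h) (f * derivative g)) := by
  rw [ahCommutator, hfg]
  rw [map_mul, map_mul, mul_add]
  rw [mul_assoc]

lemma Gy (F : Type) [Field F] (h g f : F[X]) (hfg : h = g * f) :
    aeval (aX F h) g * aY F h =
      (aY F h - aeval (aX F h) (f * derivative g)) * aeval (aX F h) g := by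
  have := yG F h g f hfg
  rw [sub_mul, this, mul_add, aeval_comm F h g (f * derivative g), add_sub_cancel_right]

lemma left_to_right (F : Type) [Field F] (h g f : F[X]) (hfg : h = g * f) (z : AW F h) :
    ∃ b, aeval (aX F h) g * z = b * aeval (aX F h) g := by
  obtain ⟨w, rfl⟩ := RingQuot.mkAlgHom_surjective F (ahRel F h) z
  induction w using FreeAlgebra.induction with
  | grade0 r =>
      exact ⟨algebraMap F _ r, by rw [AlgHom.commutes, Algebra.commutes]⟩
  | grade1 i =>
      fin_cases i
      · refine ⟨aX F h, ?_⟩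
        show aeval (aX F h) g * aX F h = aX F h * aeval (aX F h) g
        exact aX_comm F h g
      · refine ⟨aY F h - aeval (aX F h) (f * derivative g), ?_⟩
        show aeval (aX F h) g * aY F h = _
        rw [Gy F h g f hfg]
  | mul a b ha hb =>
      obtain ⟨ba, hba⟩ := ha
      obtain ⟨bb, hbb⟩ := hb
      refine ⟨ba * bb, ?_⟩
      rw [map_mul, ← mul_assoc, hba, mul_assoc, hbb, ← mul_assoc]
  | add a b ha hb =>
      obtain ⟨ba, hba⟩ := ha
      obtain ⟨bb, hbb⟩ := hb
      exact ⟨ba + bb, by rw [map_add, mul_add, hba, hbb, add_mul]⟩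

lemma right_to_left (F : Type) [Field F] (h g f : F[X]) (hfg : h = g * f) (z : AW F h) :
    ∃ b, z * aeval (aX F h) g = aeval (aX F h) g * b := by
  obtain ⟨w, rfl⟩ := RingQuot.mkAlgHom_surjective F (ahRel F h) z
  induction w using FreeAlgebra.induction with
  | grade0 r =>
      exact ⟨algebraMap F _ r, by rw [AlgHom.commutes, Algebra.commutes]⟩
  | grade1 i =>
      fin_cases i
      · refine ⟨aX F h, ?_⟩
        show aX F h * aeval (aX F h) g = aeval (aX F h) g * aX F h
        exact (aX_comm F h g).symm
      · refine ⟨aY F h + aeval (aX F h) (f * derivative g), ?_⟩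
        show aY F h * aeval (aX F h) g = _
        rw [yG F h g f hfg]
  | mul a b ha hb =>
      obtain ⟨ba, hba⟩ := ha
      obtain ⟨bb, hbb⟩ := hb
      refine ⟨ba * bb, ?_⟩
      rw [map_mul, mul_assoc, hbb, ← mul_assoc, hba, mul_assoc]
  | add a b ha hb =>
      obtain ⟨ba, hba⟩ := ha
      obtain ⟨bb, hbb⟩ := hb
      exact ⟨ba + bb, by rw [map_add, add_mul, hba, hbb, mul_add]⟩

/-- If `g` divides `h`, say `h = g·f`, then `g(x)` is normal in `A_h`:
`ŷ·g = g·(ŷ + f·g')`, `g·ŷ = (ŷ − f·g')·g`, and `g·A_h = A_h·g`. -/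
theorem stmt13 (F : Type) [Field F] (h g f : F[X]) (hh : h ≠ 0) (hfg : h = g * f) :
    (aY F h * aeval (aX F h) g =
      aeval (aX F h) g * (aY F h + aeval (aX F h) (f * derivative g))) ∧
    (aeval (aX F h) g * aY F h =
      (aY F h - aeval (aX F h) (f * derivative g)) * aeval (aX F h) g) ∧
    ({z : AW F h | ∃ a, z = aeval (aX F h) g * a} =
      {z : AW F h | ∃ a, z = a * aeval (aX F h) g}) := by
  refine ⟨yG F h g f hfg, Gy F h g f hfg, ?_⟩
  ext z
  simp only [Set.mem_setOf_eq]
  constructor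
  · rintro ⟨a, rfl⟩
    obtain ⟨b, hb⟩ := left_to_right F h g f hfg a
    exact ⟨b, hb⟩
  · rintro ⟨a, rfl⟩
    obtain ⟨b, hb⟩ := right_to_left F h g f hfg a
    exact ⟨b, hb⟩
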